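/- arXiv:2210.17330 — 4 statements merged into one kernel-verified Lean document; each statement's English description precedes it below -/
import Mathlib

section
/- Let X be a set and let X' = X ∪ {u} where u is a fresh element not in X (e.g., X' = Option X with u = none). For each x ∈ X let m_x be the equivalence relation on X' defined by: m_x relates a and b iff (a = x ↔ b = x) (its classes are {x} and X'∖{x}). For each Y ⊆ X let e_Y be the equivalence relation on X' defined by: e_Y relates a and b iff a = b, or (a ∉ Y and b ∉ Y) (its classes are the singletons {y} for y ∈ Y, together with X'∖Y). Then: (i) for every Y ⊆ X, e_Y is the infimum ⨅_{x ∈ Y} m_x in the complete lattice of equivalence relations on X'; and (ii) for all Y₁, Y₂ ⊆ X, e_{Y₁} ≤ e_{Y₂} if and only if Y₂ ⊆ Y₁. Consequently Y ↦ e_Y is an order isomorphism from (P(X), ⊇) onto the sub-meet-semilattice of equivalence relations on X' meet-generated by the elements m_x, x ∈ X. -/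
/-- The coatom-type equivalence relation `m_x` on `X' = Option X` (with `u = none`),
whose classes are `{some x}` and `X' \ {some x}`. -/
def mSetoid {X : Type*} (x : X) : Setoid (Option X) where
  r a b := (a = some x ↔ b = some x)
  iseqv := ⟨fun _ => Iff.rfl, Iff.symm, Iff.trans⟩

/-- The equivalence relation `e_Y` on `X' = Option X` associated to an agenda `Y ⊆ X`:
its classes are the singletons `{some y}` for `y ∈ Y`, together with `X' \ Y`. -/
def eSetoid {X : Type*} (Y : Set X) : Setoid (Option X) where
  r a b := a = b ∨ ((∀ y ∈ Y, a ≠ some y) ∧ (∀ y ∈ Y, b ≠ some y))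
  iseqv := by
    constructor
    · intro a; exact Or.inl rfl
    · rintro a b (rfl | ⟨ha, hb⟩)
      · exact Or.inl rfl
      · exact Or.inr ⟨hb, ha⟩
    · rintro a b c (rfl | ⟨ha, hb⟩) (rfl | ⟨hb', hc⟩)
      · exact Or.inl rfl
      · exact Or.inr ⟨hb', hc⟩
      · exact Or.inr ⟨ha, hb⟩
      · exact Or.inr ⟨ha, hc⟩

/-!
Two points of `Option X` are related by every `m_x` with `x ∈ Y` exactly when they are equal or
both avoid `Y`, which is how `e_Y` is defined; this gives (i) and makes `Y ↦ e_Y` antitone.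
Conversely, a point `x ∈ Y₂ \ Y₁` is `e_{Y₁}`-related but not `e_{Y₂}`-related to the fresh
point `none`.
-/

theorem Setoid.iInf_iff {α : Type*} {ι : Sort*} {r : ι → Setoid α} {a b : α} :
    (⨅ i, r i) a b ↔ ∀ i, r i a b :=
  Set.forall_mem_range

theorem Setoid.iInf₂_iff {α : Type*} {ι : Sort*} {κ : ι → Sort*} {r : ∀ i, κ i → Setoid α}
    {a b : α} : (⨅ (i) (j), r i j) a b ↔ ∀ i j, r i j a b := by
  simp only [Setoid.iInf_iff]

theorem eSetoid_iff_forall_mem {X : Type*} {Y : Set X} {a b : Option X} :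
    eSetoid Y a b ↔ ∀ y ∈ Y, (a = some y ↔ b = some y) := by
  refine ⟨?_, fun h => ?_⟩
  · rintro (rfl | ⟨ha, hb⟩) y hy
    · exact Iff.rfl
    · exact iff_of_false (ha y hy) (hb y hy)
  · by_cases ha : ∃ y ∈ Y, a = some y
    · obtain ⟨y, hy, rfl⟩ := ha
      exact Or.inl ((h y hy).mp rfl).symm
    · push Not at ha
      exact Or.inr ⟨ha, fun y hy hb => ha y hy ((h y hy).mpr hb)⟩

theorem eSetoid_eq_biInf_mSetoid {X : Type*} (Y : Set X) :
    eSetoid Y = ⨅ x ∈ Y, mSetoid x :=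
  Setoid.ext fun _ _ => by rw [Setoid.iInf₂_iff]; exact eSetoid_iff_forall_mem

theorem eSetoid_antitone {X : Type*} : Antitone (eSetoid (X := X)) := fun Y₁ Y₂ h => by
  simp only [eSetoid_eq_biInf_mSetoid]
  exact biInf_mono h

theorem eSetoid_some_none_iff {X : Type*} {Y : Set X} {x : X} :
    eSetoid Y (some x) none ↔ x ∉ Y := by
  simp only [eSetoid_iff_forall_mem, Option.some_inj, reduceCtorEq, iff_false]
  exact ⟨fun h hx => h x hx rfl, fun hx y hy hxy => hx (hxy ▸ hy)⟩

theorem eSetoid_le_eSetoid_iff {X : Type*} {Y₁ Y₂ : Set X} :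
    eSetoid Y₁ ≤ eSetoid Y₂ ↔ Y₂ ⊆ Y₁ := by
  refine ⟨fun h x hx₂ => ?_, fun h => eSetoid_antitone h⟩
  by_contra hx₁
  exact eSetoid_some_none_iff.mp (h (eSetoid_some_none_iff.mpr hx₁)) hx₂

/-- (i) for every `Y ⊆ X`, `e_Y` is the infimum of the `m_x`, `x ∈ Y`, in the
complete lattice of equivalence relations on `X' = Option X`; and (ii) `e_{Y₁} ≤ e_{Y₂}`
iff `Y₂ ⊆ Y₁`.  Hence `Y ↦ e_Y` is an order isomorphism from `(P(X), ⊇)` onto the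
sub-meet-semilattice meet-generated by the `m_x`. -/
theorem eSetoid_inf_and_order_reversing {X : Type*} :
    (∀ Y : Set X, eSetoid Y = ⨅ x ∈ Y, mSetoid x) ∧
    (∀ Y₁ Y₂ : Set X, eSetoid Y₁ ≤ eSetoid Y₂ ↔ Y₂ ⊆ Y₁) :=
  ⟨eSetoid_eq_biInf_mSetoid, fun _ _ => eSetoid_le_eSetoid_iff⟩
end

section
/- Let (A, X, I) be a formal context and let Y₁ ⊆ Y₂ ⊆ X. If a subset B ⊆ A is Galois-stable with respect to Y₁, then B is Galois-stable with respect to Y₂. -/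
/-- `Y`-restricted upward derivation operator of a formal context `(A, X, I)`:
`B↑_Y = {x ∈ Y | ∀ a ∈ B, (a,x) ∈ I}`. -/
def fcaUp {A X : Type*} (I : Set (A × X)) (Y : Set X) (B : Set A) : Set X :=
  {x ∈ Y | ∀ a ∈ B, (a, x) ∈ I}

/-- Downward derivation operator: `Z↓ = {a ∈ A | ∀ x ∈ Z, (a,x) ∈ I}`. -/
def fcaDown {A X : Type*} (I : Set (A × X)) (Z : Set X) : Set A :=
  {a | ∀ x ∈ Z, (a, x) ∈ I}

/-- `B ⊆ A` is Galois-stable with respect to `Y ⊆ X` if `(B↑_Y)↓ = B`. -/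
def GaloisStable {A X : Type*} (I : Set (A × X)) (Y : Set X) (B : Set A) : Prop :=
  fcaDown I (fcaUp I Y B) = B

section FormalContext

variable {A X : Type*} (I : Set (A × X))

theorem fcaUp_mono_left {Y₁ Y₂ : Set X} (hY : Y₁ ⊆ Y₂) (B : Set A) :
    fcaUp I Y₁ B ⊆ fcaUp I Y₂ B :=
  fun _ hx => ⟨hY hx.1, hx.2⟩

theorem fcaDown_anti {Z₁ Z₂ : Set X} (hZ : Z₁ ⊆ Z₂) : fcaDown I Z₂ ⊆ fcaDown I Z₁ :=
  fun _ ha x hx => ha x (hZ hx)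

theorem subset_fcaDown_fcaUp (Y : Set X) (B : Set A) : B ⊆ fcaDown I (fcaUp I Y B) :=
  fun a ha _ hx => hx.2 a ha

theorem galoisStable_iff_fcaDown_fcaUp_subset {Y : Set X} {B : Set A} :
    GaloisStable I Y B ↔ fcaDown I (fcaUp I Y B) ⊆ B :=
  ⟨fun h => h.subset, fun h => h.antisymm (subset_fcaDown_fcaUp I Y B)⟩

end FormalContext

/-- if `Y₁ ⊆ Y₂ ⊆ X` and `B ⊆ A` is Galois-stable w.r.t. `Y₁`,
then `B` is Galois-stable w.r.t. `Y₂`. -/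
theorem galoisStable_mono {A X : Type*} (I : Set (A × X)) (Y₁ Y₂ : Set X)
    (hY : Y₁ ⊆ Y₂) (B : Set A) (hB : GaloisStable I Y₁ B) :
    GaloisStable I Y₂ B := by
  rw [galoisStable_iff_fcaDown_fcaUp_subset]
  calc fcaDown I (fcaUp I Y₂ B) ⊆ fcaDown I (fcaUp I Y₁ B) :=
        fcaDown_anti I (fcaUp_mono_left I hY B)
    _ = B := hB
end

section
/- Let X be a finite set and let m₁, m₂ be mass functions on X. If m₁ ≤_s m₂, then m₁ ≤_↑ m₂. -/
/-- A (Dempster–Shafer) mass function on a finite set `X`: a nonnegative real-valued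
function on subsets of `X` summing to `1`. -/
def IsMassFunction {X : Type*} [Fintype X] (m : Finset X → ℝ) : Prop :=
  (∀ Y, 0 ≤ m Y) ∧ (∑ Y : Finset X, m Y = 1)

/-- The s-ordering on mass functions: `m₁ ≤_s m₂` iff there is a (generalized stochastic)
matrix `S` with nonnegative entries, columns summing to one, `S(W,Y) > 0 → W ⊆ Y`,
and `m₁(W) = Σ_Y S(W,Y)·m₂(Y)`. -/
def sLE {X : Type*} [Fintype X] (m₁ m₂ : Finset X → ℝ) : Prop :=
  ∃ S : Finset X → Finset X → ℝ,
    (∀ W Y, 0 ≤ S W Y) ∧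
    (∀ Y, ∑ W : Finset X, S W Y = 1) ∧
    (∀ W Y, 0 < S W Y → W ⊆ Y) ∧
    (∀ W, m₁ W = ∑ Y : Finset X, S W Y * m₂ Y)

/-- The up-set restricted order: `m₁ ≤_↑ m₂` iff for every upward closed family `𝒱`
of subsets of `X`, `Σ_{Y ∈ 𝒱} m₁(Y) ≤ Σ_{Y ∈ 𝒱} m₂(Y)`. -/
def upLE {X : Type*} [Fintype X] (m₁ m₂ : Finset X → ℝ) : Prop :=
  ∀ V : Finset (Finset X), (∀ Y ∈ V, ∀ Z : Finset X, Y ⊆ Z → Z ∈ V) →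
    (∑ Y ∈ V, m₁ Y) ≤ ∑ Y ∈ V, m₂ Y

/-! A substochastic kernel `S` that only moves mass downwards (`S W Y > 0 → W ≤ Y`) cannot
increase the mass of an upper set `V`: the mass that lands in `V` comes only from `V`,
and each column of `S` distributes at most the mass it receives. -/

section DownwardKernel

variable {α : Type*} [Preorder α] {S : α → α → ℝ} {V : Finset α}

theorem sum_kernel_eq_zero_of_notMem_upperSet (hS0 : ∀ W Y, 0 ≤ S W Y)
    (hSle : ∀ W Y, 0 < S W Y → W ≤ Y) (hV : IsUpperSet (V : Set α)) {Y : α} (hY : Y ∉ V) :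
    ∑ W ∈ V, S W Y = 0 := by
  refine Finset.sum_eq_zero fun W hW => (hS0 W Y).eq_or_lt.elim Eq.symm fun hpos => ?_
  exact absurd (hV (hSle W Y hpos) hW) hY

variable [Fintype α] [DecidableEq α]

theorem sum_kernel_mul_le_ite_mem (hS0 : ∀ W Y, 0 ≤ S W Y)
    (hcol : ∀ Y, ∑ W, S W Y ≤ 1) (hSle : ∀ W Y, 0 < S W Y → W ≤ Y)
    (hV : IsUpperSet (V : Set α)) {m : α → ℝ} (hm : ∀ Y, 0 ≤ m Y) (Y : α) :
    (∑ W ∈ V, S W Y) * m Y ≤ if Y ∈ V then m Y else 0 := by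
  split_ifs with hY
  · have hle : ∑ W ∈ V, S W Y ≤ 1 :=
      (Finset.sum_le_univ_sum_of_nonneg fun W => hS0 W Y).trans (hcol Y)
    simpa using mul_le_mul_of_nonneg_right hle (hm Y)
  · rw [sum_kernel_eq_zero_of_notMem_upperSet hS0 hSle hV hY, zero_mul]

theorem sum_upperSet_kernel_apply_le (hS0 : ∀ W Y, 0 ≤ S W Y)
    (hcol : ∀ Y, ∑ W, S W Y ≤ 1) (hSle : ∀ W Y, 0 < S W Y → W ≤ Y)
    (hV : IsUpperSet (V : Set α)) {m : α → ℝ} (hm : ∀ Y, 0 ≤ m Y) :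
    ∑ W ∈ V, ∑ Y, S W Y * m Y ≤ ∑ Y ∈ V, m Y :=
  calc ∑ W ∈ V, ∑ Y, S W Y * m Y = ∑ Y, (∑ W ∈ V, S W Y) * m Y := by
        simp only [Finset.sum_comm (s := V), Finset.sum_mul]
    _ ≤ ∑ Y, if Y ∈ V then m Y else 0 :=
        Finset.sum_le_sum fun Y _ => sum_kernel_mul_le_ite_mem hS0 hcol hSle hV hm Y
    _ = ∑ Y ∈ V, m Y := by simp

end DownwardKernel

theorem sLE_implies_upLE_general {X : Type*} [Fintype X] (m₁ m₂ : Finset X → ℝ)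
    (h₂ : IsMassFunction m₂) (h : sLE m₁ m₂) :
    upLE m₁ m₂ := by
  classical
  obtain ⟨S, hS0, hScol, hSsub, hSm⟩ := h
  intro V hV
  simp only [hSm]
  exact sum_upperSet_kernel_apply_le hS0 (fun Y => (hScol Y).le) hSsub
    (fun Y Z hYZ hY => hV Y hY Z hYZ) h₂.1

/-- `m₁ ≤_s m₂` implies `m₁ ≤_↑ m₂`. -/
theorem sLE_implies_upLE {X : Type*} [Fintype X] (m₁ m₂ : Finset X → ℝ)
    (h₁ : IsMassFunction m₁) (h₂ : IsMassFunction m₂) (h : sLE m₁ m₂) :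
    upLE m₁ m₂ :=
  sLE_implies_upLE_general m₁ m₂ h₂ h
end

section
/- Let (A, X, I) be a formal context with X finite, let m₁, m₂ be mass functions on X, and let β ∈ [0,1]. Then for every B ⊆ A: (1) if B ∈ ℙ(m₁ ∩ m₂, β), then B ∈ ℙ(m₁, β) and B ∈ ℙ(m₂, β); (2) if B ∈ ℙ(m₁, β) or B ∈ ℙ(m₂, β), then B ∈ ℙ(m₁ ∪ m₂, β). Here m₁ ∩ m₂ is the unnormalized conjunctive (Dempster) combination and m₁ ∪ m₂ the disjunctive combination. -/
open scoped Classical in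
/-- The stability index of `G ⊆ A`:
`ρ_m(G) = Σ { m(Y) : Y ⊆ X such that G is Galois-stable w.r.t. Y }`. -/
noncomputable def stabilityIndex {A X : Type*} [Fintype X] (I : Set (A × X))
    (m : Finset X → ℝ) (G : Set A) : ℝ :=
  ∑ Y : Finset X, if GaloisStable I (↑Y : Set X) G then m Y else 0

/-- The β-categorization `ℙ(m, β) = { (G↑_X)↓ : G ⊆ A with ρ_m(G) ≥ β }`. -/
noncomputable def betaCategorization {A X : Type*} [Fintype X] (I : Set (A × X))
    (m : Finset X → ℝ) (β : ℝ) : Set (Set A) :=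
  {B | ∃ G : Set A, β ≤ stabilityIndex I m G ∧ fcaDown I (fcaUp I Set.univ G) = B}

/-- Unnormalized conjunctive (Dempster) combination:
`(m₁ ∩ m₂)(Y) = Σ_{Y₁ ∩ Y₂ = Y} m₁(Y₁)·m₂(Y₂)`. -/
def conjComb {X : Type*} [Fintype X] [DecidableEq X] (m₁ m₂ : Finset X → ℝ)
    (Y : Finset X) : ℝ :=
  ∑ p : Finset X × Finset X, if p.1 ∩ p.2 = Y then m₁ p.1 * m₂ p.2 else 0

/-- Disjunctive combination: `(m₁ ∪ m₂)(Y) = Σ_{Y₁ ∪ Y₂ = Y} m₁(Y₁)·m₂(Y₂)`. -/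
def disjComb {X : Type*} [Fintype X] [DecidableEq X] (m₁ m₂ : Finset X → ℝ)
    (Y : Finset X) : ℝ :=
  ∑ p : Finset X × Finset X, if p.1 ∪ p.2 = Y then m₁ p.1 * m₂ p.2 else 0

/-!
Galois stability with respect to `Y` is inherited by every `Z ⊇ Y`, so the stability index of `G`
is the mass of an upward closed family of subsets of `X`. The conjunctive combination moves mass
from `Y₁` (resp. `Y₂`) down to `Y₁ ∩ Y₂` and the disjunctive one moves it up to `Y₁ ∪ Y₂`; hence
upward closed families lose mass under `m₁ ∩ m₂` and gain mass under `m₁ ∪ m₂`. Stability indices,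
and with them the β-categorizations, follow the same inclusions.
-/

open Finset

section Combination

variable {X : Type*} [Fintype X] [DecidableEq X]

lemma conjComb_comm (m₁ m₂ : Finset X → ℝ) : conjComb m₁ m₂ = conjComb m₂ m₁ := by
  funext Y
  unfold conjComb
  rw [← (Equiv.prodComm _ _).sum_comp]
  simp only [Equiv.prodComm_apply, Prod.fst_swap, Prod.snd_swap, inter_comm, mul_comm]

lemma disjComb_comm (m₁ m₂ : Finset X → ℝ) : disjComb m₁ m₂ = disjComb m₂ m₁ := by
  funext Y
  unfold disjComb
  rw [← (Equiv.prodComm _ _).sum_comp]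
  simp only [Equiv.prodComm_apply, Prod.fst_swap, Prod.snd_swap, union_comm, mul_comm]

lemma sum_sum_ite_op_eq (V : Finset (Finset X)) (op : Finset X → Finset X → Finset X)
    (m₁ m₂ : Finset X → ℝ) :
    ∑ Y ∈ V, ∑ p : Finset X × Finset X, (if op p.1 p.2 = Y then m₁ p.1 * m₂ p.2 else 0) =
      ∑ p : Finset X × Finset X with op p.1 p.2 ∈ V, m₁ p.1 * m₂ p.2 := by
  rw [sum_comm, sum_filter]
  exact sum_congr rfl fun p _ => sum_ite_eq V (op p.1 p.2) _

lemma sum_filter_fst_mem_mul {m₂ : Finset X → ℝ} (h₂ : ∑ Y, m₂ Y = 1)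
    (V : Finset (Finset X)) (m₁ : Finset X → ℝ) :
    ∑ p : Finset X × Finset X with p.1 ∈ V, m₁ p.1 * m₂ p.2 = ∑ Y ∈ V, m₁ Y := by
  rw [show (univ.filter fun p : Finset X × Finset X => p.1 ∈ V) = V ×ˢ univ by ext; simp,
    sum_product]
  simp only [← mul_sum, h₂, mul_one]

lemma upLE_conjComb_left {m₁ m₂ : Finset X → ℝ} (h₁ : ∀ Y, 0 ≤ m₁ Y)
    (h₂ : IsMassFunction m₂) : upLE (conjComb m₁ m₂) m₁ := by
  intro V hV
  calc ∑ Y ∈ V, conjComb m₁ m₂ Y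
      = ∑ p : Finset X × Finset X with p.1 ∩ p.2 ∈ V, m₁ p.1 * m₂ p.2 :=
        sum_sum_ite_op_eq V (· ∩ ·) m₁ m₂
    _ ≤ ∑ p : Finset X × Finset X with p.1 ∈ V, m₁ p.1 * m₂ p.2 :=
        sum_le_sum_of_subset_of_nonneg
          (monotone_filter_right _ fun p _ hp => hV _ hp _ inter_subset_left)
          fun p _ _ => mul_nonneg (h₁ _) (h₂.1 _)
    _ = ∑ Y ∈ V, m₁ Y := sum_filter_fst_mem_mul h₂.2 V m₁

lemma upLE_conjComb_right {m₁ m₂ : Finset X → ℝ} (h₁ : IsMassFunction m₁)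
    (h₂ : ∀ Y, 0 ≤ m₂ Y) : upLE (conjComb m₁ m₂) m₂ :=
  conjComb_comm m₁ m₂ ▸ upLE_conjComb_left h₂ h₁

lemma upLE_disjComb_left {m₁ m₂ : Finset X → ℝ} (h₁ : ∀ Y, 0 ≤ m₁ Y)
    (h₂ : IsMassFunction m₂) : upLE m₁ (disjComb m₁ m₂) := by
  intro V hV
  calc ∑ Y ∈ V, m₁ Y
      = ∑ p : Finset X × Finset X with p.1 ∈ V, m₁ p.1 * m₂ p.2 :=
        (sum_filter_fst_mem_mul h₂.2 V m₁).symm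
    _ ≤ ∑ p : Finset X × Finset X with p.1 ∪ p.2 ∈ V, m₁ p.1 * m₂ p.2 :=
        sum_le_sum_of_subset_of_nonneg
          (monotone_filter_right _ fun p _ hp => hV _ hp _ subset_union_left)
          fun p _ _ => mul_nonneg (h₁ _) (h₂.1 _)
    _ = ∑ Y ∈ V, disjComb m₁ m₂ Y := (sum_sum_ite_op_eq V (· ∪ ·) m₁ m₂).symm

lemma upLE_disjComb_right {m₁ m₂ : Finset X → ℝ} (h₁ : IsMassFunction m₁)
    (h₂ : ∀ Y, 0 ≤ m₂ Y) : upLE m₂ (disjComb m₁ m₂) :=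
  disjComb_comm m₁ m₂ ▸ upLE_disjComb_left h₂ h₁

end Combination

section Categorization

variable {A X : Type*}

lemma GaloisStable.mono {I : Set (A × X)} {Y Z : Set X} {G : Set A} (hYZ : Y ⊆ Z)
    (h : GaloisStable I Y G) : GaloisStable I Z G := by
  refine subset_antisymm (fun a ha => ?_) fun a ha x hx => hx.2 a ha
  rw [← h]
  exact fun x hx => ha x ⟨hYZ hx.1, hx.2⟩

variable [Fintype X]

open scoped Classical in
lemma stabilityIndex_eq_sum_filter (I : Set (A × X)) (m : Finset X → ℝ) (G : Set A) :
    stabilityIndex I m G =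
      ∑ Y ∈ univ.filter fun Y : Finset X => GaloisStable I (↑Y : Set X) G, m Y :=
  (sum_filter _ _).symm

lemma stabilityIndex_le_of_upLE {m m' : Finset X → ℝ} (h : upLE m m') (I : Set (A × X))
    (G : Set A) : stabilityIndex I m G ≤ stabilityIndex I m' G := by
  classical
  rw [stabilityIndex_eq_sum_filter, stabilityIndex_eq_sum_filter]
  refine h _ fun Y hY Z hYZ => ?_
  simp only [mem_filter, mem_univ, true_and] at hY ⊢
  exact hY.mono (coe_subset.mpr hYZ)

lemma betaCategorization_subset_of_upLE {m m' : Finset X → ℝ} (h : upLE m m')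
    (I : Set (A × X)) (β : ℝ) : betaCategorization I m β ⊆ betaCategorization I m' β :=
  fun _ ⟨G, hβ, hB⟩ => ⟨G, hβ.trans (stabilityIndex_le_of_upLE h I G), hB⟩

end Categorization

theorem betaCategorization_conj_disj_general {A X : Type*} [Fintype X] [DecidableEq X]
    (I : Set (A × X)) (m₁ m₂ : Finset X → ℝ)
    (h₁ : IsMassFunction m₁) (h₂ : IsMassFunction m₂)
    (β : ℝ) (B : Set A) :
    (B ∈ betaCategorization I (conjComb m₁ m₂) β →
      B ∈ betaCategorization I m₁ β ∧ B ∈ betaCategorization I m₂ β) ∧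
    ((B ∈ betaCategorization I m₁ β ∨ B ∈ betaCategorization I m₂ β) →
      B ∈ betaCategorization I (disjComb m₁ m₂) β) := by
  refine ⟨fun hB => ⟨?_, ?_⟩, fun hB => hB.elim (fun hB => ?_) (fun hB => ?_)⟩
  · exact betaCategorization_subset_of_upLE (upLE_conjComb_left h₁.1 h₂) I β hB
  · exact betaCategorization_subset_of_upLE (upLE_conjComb_right h₁ h₂.1) I β hB
  · exact betaCategorization_subset_of_upLE (upLE_disjComb_left h₁.1 h₂) I β hB
  · exact betaCategorization_subset_of_upLE (upLE_disjComb_right h₁ h₂.1) I β hB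

/-- (1) `B ∈ ℙ(m₁ ∩ m₂, β)` implies `B ∈ ℙ(m₁, β)` and `B ∈ ℙ(m₂, β)`;
(2) `B ∈ ℙ(m₁, β)` or `B ∈ ℙ(m₂, β)` implies `B ∈ ℙ(m₁ ∪ m₂, β)`. -/
theorem betaCategorization_conj_disj {A X : Type*} [Fintype X] [DecidableEq X]
    (I : Set (A × X)) (m₁ m₂ : Finset X → ℝ)
    (h₁ : IsMassFunction m₁) (h₂ : IsMassFunction m₂)
    (β : ℝ) (h0 : 0 ≤ β) (hβ1 : β ≤ 1) (B : Set A) :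
    (B ∈ betaCategorization I (conjComb m₁ m₂) β →
      B ∈ betaCategorization I m₁ β ∧ B ∈ betaCategorization I m₂ β) ∧
    ((B ∈ betaCategorization I m₁ β ∨ B ∈ betaCategorization I m₂ β) →
      B ∈ betaCategorization I (disjComb m₁ m₂) β) :=
  betaCategorization_conj_disj_general I m₁ m₂ h₁ h₂ β B
end
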